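/- For all positive integers T and N (with N, T > N_ℓ), the instance in which all remaining agents have exactly T active days is a worst case for the symmetric threshold-T policy against the state-dependent optimum: C(T, N) · SDOPT(T) ≤ C(T, T) · SDOPT(N), i.e., C(T, N)/SDOPT(N) ≤ C(T, T)/SDOPT(T). -/

import Mathlib

/-- Total cost of the symmetric threshold-`T` policy at the state with `ℓ` inactive
agents of total paid cost `D`, on the instance where every remaining agent has `n`
active days. -/
def thrCost (M B G ℓ D T n : ℕ) : ℕ :=
  if n < T then D + (M - ℓ) * n else D + (M - ℓ) * (T - 1) + min G ((M - ℓ) * B)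

/-- State-dependent offline optimum at that state on instance `n`. -/
def sdOpt (M B G ℓ D n : ℕ) : ℕ := D + min ((M - ℓ) * min n B) G

/-! If `n < T`, the optimum on instance `n` is the minimum of the policy's cost `D + (M - ℓ) n`
and the cap `D + min G ((M - ℓ) B)`. When the minimum is the policy's cost, the ratio on
instance `n` is `1`; when it is the cap, the optimum on instance `n` is at least the optimum
on instance `T`, while the policy pays at most what it pays on instance `T`. -/

theorem Nat.mul_le_mul_min {a b d y : ℕ} (hab : a ≤ b) (hyb : y ≤ b) (hyd : y ≤ d) :
    a * y ≤ b * min a d := by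
  rcases le_total a d with had | hda
  · rw [min_eq_left had, mul_comm b]
    exact Nat.mul_le_mul_left a hyb
  · rw [min_eq_right hda]
    exact Nat.mul_le_mul hab hyd

section ThresholdPolicy

variable {M B G ℓ D : ℕ}

theorem sdOpt_eq_min (n : ℕ) :
    sdOpt M B G ℓ D n = min (D + (M - ℓ) * n) (D + min G ((M - ℓ) * B)) := by
  rw [sdOpt, ← add_min, mul_min, min_comm G, min_assoc]

theorem sdOpt_le_cap (n : ℕ) : sdOpt M B G ℓ D n ≤ D + min G ((M - ℓ) * B) :=
  (sdOpt_eq_min n).trans_le (min_le_right _ _)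

theorem sdOpt_mono : Monotone (sdOpt M B G ℓ D) := by
  intro m n hmn
  simp only [sdOpt_eq_min]
  gcongr

theorem thrCost_of_lt {T n : ℕ} (h : n < T) : thrCost M B G ℓ D T n = D + (M - ℓ) * n :=
  if_pos h

theorem thrCost_of_le {T n : ℕ} (h : T ≤ n) :
    thrCost M B G ℓ D T n = thrCost M B G ℓ D T T := by
  rw [thrCost, thrCost, if_neg h.not_gt, if_neg (lt_irrefl T)]

theorem thrCost_le_thrCost_self (T n : ℕ) :
    thrCost M B G ℓ D T n ≤ thrCost M B G ℓ D T T := by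
  rcases lt_or_ge n T with h | h
  · rw [thrCost_of_lt h, thrCost, if_neg (lt_irrefl T)]
    have : (M - ℓ) * n ≤ (M - ℓ) * (T - 1) := Nat.mul_le_mul_left _ (by omega)
    omega
  · exact (thrCost_of_le h).le

theorem sdOpt_le_thrCost_self (T : ℕ) : sdOpt M B G ℓ D T ≤ thrCost M B G ℓ D T T := by
  rw [thrCost, if_neg (lt_irrefl T)]
  exact (sdOpt_le_cap T).trans (by omega)

end ThresholdPolicy

theorem stmt17_general (M B G ℓ : ℕ) (N : ℕ → ℕ) (D : ℕ) :
    ∀ T n : ℕ, N ℓ < T → N ℓ < n →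
      thrCost M B G ℓ D T n * sdOpt M B G ℓ D T ≤
        thrCost M B G ℓ D T T * sdOpt M B G ℓ D n := by
  intro T n _ _
  rcases lt_or_ge n T with h | h
  · rw [sdOpt_eq_min n, ← thrCost_of_lt h]
    exact Nat.mul_le_mul_min (thrCost_le_thrCost_self T n) (sdOpt_le_thrCost_self T)
      (sdOpt_le_cap T)
  · rw [thrCost_of_le h]
    exact Nat.mul_le_mul_left _ (sdOpt_mono h)

/-- The instance in which all remaining agents have exactly `T` active days is a worst
case for the symmetric threshold-`T` policy against the state-dependent optimum. -/
theorem stmt17 (M B G ℓ : ℕ) (hM : 2 ≤ M) (hB : 1 ≤ B)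
    (hBG : B < G) (hGMB : G < M * B) (hℓ : ℓ ≤ M - 1)
    (N : ℕ → ℕ) (hN0 : N 0 = 0)
    (hNpos : ∀ n, 1 ≤ n → n ≤ ℓ → 0 < N n)
    (hNmono : ∀ i j, 1 ≤ i → i ≤ j → j ≤ ℓ → N i ≤ N j)
    (D : ℕ) (hD : D = ∑ n ∈ Finset.Icc 1 ℓ, N n) :
    ∀ T n : ℕ, N ℓ < T → N ℓ < n →
      thrCost M B G ℓ D T n * sdOpt M B G ℓ D T ≤
        thrCost M B G ℓ D T T * sdOpt M B G ℓ D n :=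
  stmt17_general M B G ℓ N D
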